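/- arXiv:2409.04431 — 4 statements merged into one kernel-verified Lean document; each statement's English description precedes it below -/
import Mathlib

section
/- Let n ≥ 2, let 0 ≤ l_1 < l_2 < … < l_n be reals, let c > 1, define s_j = (∑_{k=1}^n l_k) - l_j, and define l̃_j = l_j + c·s_j + ∑_{i=0}^{j-2} c^{i+2} ∑_{k=i}^{j-2} C(k,i)·s_{k-i+1}. Then the sequence (l̃_j)_{j=1}^n is strictly increasing: l̃_j > l̃_{j-1} for all 2 ≤ j ≤ n. -/
/-!
The double sum defining `l̃_j` grows from `j - 1` to `j` only by its top row `k = j - 2`, so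
`l̃_j - l̃_{j-1} = (1 - c)(l_j - l_{j-1}) + ∑_i c^(i+2) C(j-2, i) s_{j-1-i}`. All `s_k` are
nonnegative, and the `i = 0` term alone is `c² s_{j-1} ≥ c² l_j ≥ c² (l_j - l_{j-1})`;
the increment is therefore at least `(c² - c + 1)(l_j - l_{j-1}) > 0`.
-/

open Finset

theorem sum_range_succ_mul_sum_Icc {R : Type*} [CommSemiring R] (a : ℕ → R) (f : ℕ → ℕ → R)
    (m : ℕ) :
    ∑ i ∈ range (m + 1), a i * ∑ k ∈ Icc i m, f i k =
      ∑ i ∈ range m, a i * ∑ k ∈ Icc i (m - 1), f i k + ∑ i ∈ range (m + 1), a i * f i m := by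
  cases m with
  | zero => simp
  | succ m =>
    rw [sum_range_succ, sum_range_succ (fun i => a i * f i (m + 1)), Icc_self, sum_singleton,
      ← add_assoc, Nat.add_sub_cancel, ← sum_add_distrib]
    congr 1
    refine sum_congr rfl fun i hi => ?_
    rw [sum_Icc_succ_top (by simp at hi; omega), mul_add]

theorem apply_one_le_apply_of_pred_lt {α : Type*} [Preorder α] {n : ℕ} {l : ℕ → α}
    (hmono : ∀ j, 2 ≤ j → j ≤ n → l (j - 1) < l j) {k : ℕ} (hk : k ∈ Icc 1 n) : l 1 ≤ l k := by
  obtain ⟨hk1, hkn⟩ := mem_Icc.1 hk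
  clear hk
  induction k, hk1 using Nat.le_induction with
  | base => exact le_rfl
  | succ k hk1 ih => exact (ih (by omega)).trans (hmono (k + 1) (by omega) hkn).le

theorem ltilde_strict_mono_general (n : ℕ) (c : ℝ) (hc : 1 < c)
    (l s lt : ℕ → ℝ)
    (hl0 : 0 ≤ l 1)
    (hmono : ∀ j, 2 ≤ j → j ≤ n → l (j - 1) < l j)
    (hs : ∀ j, s j = (∑ k ∈ Finset.Icc 1 n, l k) - l j)
    (hlt : ∀ j, lt j = l j + c * s j +
      ∑ i ∈ Finset.range (j - 1), c ^ (i + 2) *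
        ∑ k ∈ Finset.Icc i (j - 2), (Nat.choose k i : ℝ) * s (k - i + 1)) :
    ∀ j, 2 ≤ j → j ≤ n → lt (j - 1) < lt j := by
  intro j hj2 hjn
  obtain ⟨m, rfl⟩ : ∃ m, j = m + 2 := ⟨j - 2, by omega⟩
  have hl_nonneg : ∀ k ∈ Icc 1 n, 0 ≤ l k := fun k hk => hl0.trans (apply_one_le_apply_of_pred_lt hmono hk)
  have hs_nonneg : ∀ k ∈ Icc 1 n, 0 ≤ s k := fun k hk => by
    rw [hs]; linarith [single_le_sum hl_nonneg hk]
  have hstep : l (m + 1) < l (m + 2) := hmono (m + 2) (by omega) hjn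
  have hls : l (m + 2) ≤ s (m + 1) := by
    rw [hs]
    linarith [add_le_sum hl_nonneg (i := m + 1) (j := m + 2) (by simp; omega) (by simp; omega)
      (by omega), hl_nonneg (m + 1) (by simp; omega)]
  have hs_sub : s (m + 2) - s (m + 1) = l (m + 1) - l (m + 2) := by simp only [hs]; ring
  have hnew : c ^ 2 * s (m + 1) ≤
      ∑ i ∈ range (m + 1), c ^ (i + 2) * ((m.choose i : ℝ) * s (m - i + 1)) := by
    have := single_le_sum (f := fun i => c ^ (i + 2) * ((m.choose i : ℝ) * s (m - i + 1)))
      (fun i hi => by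
        have := hs_nonneg (m - i + 1) (by simp at hi ⊢; omega)
        have : 0 ≤ c := by linarith
        positivity) (mem_range.2 m.succ_pos)
    simpa using this
  have hlt_prev : lt (m + 1) = l (m + 1) + c * s (m + 1) +
      ∑ i ∈ range m, c ^ (i + 2) * ∑ k ∈ Icc i (m - 1), (k.choose i : ℝ) * s (k - i + 1) :=
    hlt (m + 1)
  have hlt_next := hlt (m + 2)
  rw [show m + 2 - 1 = m + 1 from rfl, show m + 2 - 2 = m from rfl, sum_range_succ_mul_sum_Icc]
    at hlt_next
  rw [show m + 2 - 1 = m + 1 from rfl, hlt_prev, hlt_next]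
  have : c ^ 2 * (l (m + 2) - l (m + 1)) ≤ c ^ 2 * s (m + 1) := by
    gcongr; linarith [hl_nonneg (m + 1) (by simp; omega)]
  nlinarith [mul_pos (sub_pos.2 hstep) (show 0 < c ^ 2 - c + 1 by nlinarith)]

/-- The sequence l̃_j produced by the selective shifts is strictly increasing. -/
theorem ltilde_strict_mono (n : ℕ) (hn : 2 ≤ n) (c : ℝ) (hc : 1 < c)
    (l s lt : ℕ → ℝ)
    (hl0 : 0 ≤ l 1)
    (hmono : ∀ j, 2 ≤ j → j ≤ n → l (j - 1) < l j)
    (hs : ∀ j, s j = (∑ k ∈ Finset.Icc 1 n, l k) - l j)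
    (hlt : ∀ j, lt j = l j + c * s j +
      ∑ i ∈ Finset.range (j - 1), c ^ (i + 2) *
        ∑ k ∈ Finset.Icc i (j - 2), (Nat.choose k i : ℝ) * s (k - i + 1)) :
    ∀ j, 2 ≤ j → j ≤ n → lt (j - 1) < lt j :=
  ltilde_strict_mono_general n c hc l s lt hl0 hmono hs hlt
end

section
/- With the same setup (δ > 0 with δ^{-1} ∈ ℕ, d ≥ 1, n ≥ 4, ordered grid values l_1 < … < l_n in {0, δ, …, δ^{-d+1} - δ}, s_j = ∑_k l_k - l_j, l̃_j = l_j + c·s_j + ∑_{i=0}^{j-2} c^{i+2} ∑_{k=i}^{j-2} C(k,i)·s_{k-i+1}, and c > (n-1)(δ^{-d}-1)·C(n-1, ⌈(n-1)/2⌉)), one has the upper bound l̃_j < c^{j+1}·δ for every j with 1 < j < n. -/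
open Finset

/-!
Every grid value is at most `E δ` with `E = N^d - 1`, so every `s_k` is at most `A δ` with
`A = (n-1) E`. By the hockey stick identity the inner sum attached to `c^{i+2}` is at most
`C(j-1, i+1) A δ`; for `i < j-2` this is at most `B A δ` with `B` the central binomial
coefficient of `n - 1`, and for `i = j-2` it is at most `A δ`. Hence
`l̃_j ≤ A B δ ∑_{i<j} c^i + A δ c^j`. Since `A` is a natural number, either `A = 0` and the
bound is `0`, or `A ≥ 1`, so that `c > A B ≥ B ≥ 3`; then the geometric sum gives
`A B ∑_{i<j} c^i < c^{j+1}/2` and `A c^j < c^{j+1}/3`.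
-/

lemma sum_sub_le_card_sub_one_mul {ι : Type*} [DecidableEq ι] {t : Finset ι} {f : ι → ℝ}
    {b : ℝ} (hf : ∀ k ∈ t, f k ≤ b) {i : ι} (hi : i ∈ t) :
    ∑ k ∈ t, f k - f i ≤ ((#t - 1 : ℕ) : ℝ) * b := by
  rw [← sum_erase_eq_sub hi, ← card_erase_of_mem hi, ← nsmul_eq_mul]
  exact sum_le_card_nsmul _ _ _ fun k hk => hf k (mem_of_mem_erase hk)

lemma Nat.choose_le_choose_succ_div_two (n r : ℕ) : n.choose r ≤ n.choose ((n + 1) / 2) := by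
  rw [← Nat.choose_symm (by omega : (n + 1) / 2 ≤ n), show n - (n + 1) / 2 = n / 2 by omega]
  exact Nat.choose_le_middle r n

lemma sum_Icc_choose_mul_le {s : ℕ → ℝ} {S : ℝ} {i m : ℕ}
    (hs : ∀ k, 1 ≤ k → k ≤ m + 1 → s k ≤ S) :
    ∑ k ∈ Icc i m, (k.choose i : ℝ) * s (k - i + 1) ≤ (m + 1).choose (i + 1) * S :=
  calc ∑ k ∈ Icc i m, (k.choose i : ℝ) * s (k - i + 1)
      ≤ ∑ k ∈ Icc i m, (k.choose i : ℝ) * S := by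
        refine sum_le_sum fun k hk => ?_
        have hk := mem_Icc.1 hk
        exact mul_le_mul_of_nonneg_left (hs _ (by omega) (by omega)) (Nat.cast_nonneg _)
    _ = (m + 1).choose (i + 1) * S := by
        rw [← sum_mul, ← Nat.cast_sum, Nat.sum_Icc_choose]

lemma ltilde_le {l s : ℕ → ℝ} {c S B : ℝ} {m : ℕ} (hc : 0 ≤ c) (hS : 0 ≤ S)
    (hchoose : ∀ r, ((m + 1).choose r : ℝ) ≤ B) (hl : l (m + 2) ≤ S)
    (hs : ∀ k, 1 ≤ k → k ≤ m + 2 → s k ≤ S) :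
    l (m + 2) + c * s (m + 2) + ∑ i ∈ range (m + 1), c ^ (i + 2) *
        ∑ k ∈ Icc i m, (k.choose i : ℝ) * s (k - i + 1)
      ≤ S * B * ∑ i ∈ range (m + 2), c ^ i + S * c ^ (m + 2) := by
  have hinner (i : ℕ) :
      ∑ k ∈ Icc i m, (k.choose i : ℝ) * s (k - i + 1) ≤ (m + 1).choose (i + 1) * S :=
    sum_Icc_choose_mul_le fun k hk hkm => hs k hk (by omega)
  have hB : 1 ≤ B := by simpa using hchoose 0
  have hlower :
      ∑ i ∈ range m, c ^ (i + 2) * ∑ k ∈ Icc i m, (k.choose i : ℝ) * s (k - i + 1)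
        ≤ (∑ i ∈ range m, c ^ (i + 2)) * (S * B) := by
    rw [sum_mul]
    refine sum_le_sum fun i _ => mul_le_mul_of_nonneg_left ?_ (pow_nonneg hc _)
    calc _ ≤ ((m + 1).choose (i + 1) : ℝ) * S := hinner i
      _ ≤ B * S := by gcongr; exact hchoose _
      _ = S * B := mul_comm _ _
  have htop : ∑ k ∈ Icc m m, (k.choose m : ℝ) * s (k - m + 1) ≤ S := by
    simpa using hinner m
  have hSB : S ≤ S * B := le_mul_of_one_le_right hS hB
  have hsj : c * s (m + 2) ≤ c * (S * B) :=
    mul_le_mul_of_nonneg_left ((hs (m + 2) (by omega) le_rfl).trans hSB) hc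
  have hsplit : ∑ i ∈ range (m + 2), c ^ i = ∑ i ∈ range m, c ^ (i + 2) + c + 1 := by
    simp only [sum_range_succ', pow_zero, zero_add, pow_one]
  rw [sum_range_succ, hsplit]
  linarith [mul_le_mul_of_nonneg_left htop (pow_nonneg hc (m + 2))]

lemma mul_geom_sum_add_lt (A B : ℕ) {c : ℝ} (j : ℕ) (hB : 3 ≤ B) (hc : (A * B : ℝ) < c) :
    A * B * ∑ i ∈ range j, c ^ i + A * c ^ j < c ^ (j + 1) := by
  rcases Nat.eq_zero_or_pos A with rfl | hA
  · simp only [Nat.cast_zero, zero_mul, add_zero] at hc ⊢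
    exact pow_pos hc _
  have hA : (1 : ℝ) ≤ A := by exact_mod_cast hA
  have hB : (3 : ℝ) ≤ B := by exact_mod_cast hB
  have hcB : (B : ℝ) < c := by nlinarith
  set G := ∑ i ∈ range j, c ^ i
  have hG : 0 ≤ G := sum_nonneg fun i _ => pow_nonneg (by linarith) i
  have hgeom : c * G * (c - 1) = c ^ (j + 1) - c := by
    rw [mul_assoc, geom_sum_mul, pow_succ]; ring
  have hcj : 0 < c ^ j := pow_pos (by linarith) j
  have hfirst : 2 * (A * B * G) ≤ c ^ (j + 1) := by
    have hcG : c * G * 2 ≤ c * G * (c - 1) :=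
      mul_le_mul_of_nonneg_left (by linarith) (mul_nonneg (by linarith) hG)
    linarith [mul_le_mul_of_nonneg_right hc.le hG]
  have hsecond : 3 * (A * c ^ j) < c ^ (j + 1) := by
    have h3B := mul_le_mul_of_nonneg_right hB (by positivity : (0 : ℝ) ≤ A * c ^ j)
    rw [pow_succ]
    linarith [mul_lt_mul_of_pos_right hc hcj]
  linarith [pow_pos (by linarith : (0 : ℝ) < c) (j + 1)]

theorem ltilde_upper_bound_general (n d N : ℕ) (hn : 4 ≤ n) (hN : 1 ≤ N)
    (δ : ℝ) (hδ : δ > 0) (hδN : (N : ℝ) = δ⁻¹)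
    (l s lt : ℕ → ℝ) (c : ℝ)
    (hgrid : ∀ j, 1 ≤ j → j ≤ n → ∃ m : ℕ, m < N ^ d ∧ l j = (m : ℝ) * δ)
    (hc : c > ((n : ℝ) - 1) * ((δ⁻¹) ^ d - 1) * Nat.choose (n - 1) ((n - 1 + 1) / 2))
    (hs : ∀ j, s j = (∑ k ∈ Finset.Icc 1 n, l k) - l j)
    (hlt : ∀ j, lt j = l j + c * s j +
      ∑ i ∈ Finset.range (j - 1), c ^ (i + 2) *
        ∑ k ∈ Finset.Icc i (j - 2), (Nat.choose k i : ℝ) * s (k - i + 1)) :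
    ∀ j, 1 < j → j < n → lt j < c ^ (j + 1) * δ := by
  intro j hj hjn
  obtain ⟨m, rfl⟩ : ∃ m, j = m + 2 := ⟨j - 2, by omega⟩
  set A := (n - 1) * (N ^ d - 1)
  set B := (n - 1).choose ((n - 1 + 1) / 2)
  have hchoose (r : ℕ) : (n - 1).choose r ≤ B := Nat.choose_le_choose_succ_div_two _ r
  have hl (k : ℕ) (hk : 1 ≤ k) (hkn : k ≤ n) : l k ≤ ((N ^ d - 1 : ℕ) : ℝ) * δ := by
    obtain ⟨i, hi, hlk⟩ := hgrid k hk hkn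
    rw [hlk]
    gcongr
    omega
  have hsA (k : ℕ) (hk : 1 ≤ k) (hkn : k ≤ n) : s k ≤ (A : ℝ) * δ := by
    have := sum_sub_le_card_sub_one_mul (fun i hi => hl i (mem_Icc.1 hi).1 (mem_Icc.1 hi).2)
      (mem_Icc.2 ⟨hk, hkn⟩)
    rw [Nat.card_Icc, Nat.add_sub_cancel] at this
    simpa [hs k, A, mul_assoc] using this
  have hAB : (A * B : ℝ) < c := by
    have hNd : 1 ≤ N ^ d := Nat.one_le_pow _ _ hN
    simpa [A, Nat.cast_sub (by omega : 1 ≤ n), Nat.cast_sub hNd, ← hδN] using hc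
  have hB : 3 ≤ B := (hchoose 1).trans' (by rw [Nat.choose_one_right]; omega)
  have hc0 : 0 ≤ c := (by positivity : (0 : ℝ) ≤ A * B).trans hAB.le
  calc lt (m + 2)
      ≤ A * δ * B * ∑ i ∈ range (m + 2), c ^ i + A * δ * c ^ (m + 2) := by
        rw [hlt, show m + 2 - 1 = m + 1 by omega, show m + 2 - 2 = m by omega]
        refine ltilde_le hc0 (by positivity) (fun r => ?_) ?_ fun k hk _ => hsA k hk (by omega)
        · exact_mod_cast (Nat.choose_le_choose r (by omega : m + 1 ≤ n - 1)).trans (hchoose r)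
        · calc l (m + 2) ≤ ((N ^ d - 1 : ℕ) : ℝ) * δ := hl _ (by omega) (by omega)
            _ ≤ A * δ := by gcongr; exact Nat.le_mul_of_pos_left _ (by omega)
    _ = (A * B * ∑ i ∈ range (m + 2), c ^ i + A * c ^ (m + 2)) * δ := by ring
    _ < c ^ (m + 2 + 1) * δ := by
        gcongr
        exact mul_geom_sum_add_lt A B _ hB hAB

/-- Upper bound: under the constraint on c (n ≥ 4), each l̃_j with 1 < j < n
satisfies l̃_j < c^{j+1}·δ. -/
theorem ltilde_upper_bound (n d N : ℕ) (hn : 4 ≤ n) (hd : 1 ≤ d) (hN : 1 ≤ N)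
    (δ : ℝ) (hδ : δ > 0) (hδN : (N : ℝ) = δ⁻¹)
    (l s lt : ℕ → ℝ) (c : ℝ)
    (hgrid : ∀ j, 1 ≤ j → j ≤ n → ∃ m : ℕ, m < N ^ d ∧ l j = (m : ℝ) * δ)
    (hmono : ∀ j, 2 ≤ j → j ≤ n → l (j - 1) < l j)
    (hc : c > ((n : ℝ) - 1) * ((δ⁻¹) ^ d - 1) * Nat.choose (n - 1) ((n - 1 + 1) / 2))
    (hs : ∀ j, s j = (∑ k ∈ Finset.Icc 1 n, l k) - l j)
    (hlt : ∀ j, lt j = l j + c * s j +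
      ∑ i ∈ Finset.range (j - 1), c ^ (i + 2) *
        ∑ k ∈ Finset.Icc i (j - 2), (Nat.choose k i : ℝ) * s (k - i + 1)) :
    ∀ j, 1 < j → j < n → lt j < c ^ (j + 1) * δ :=
  ltilde_upper_bound_general n d N hn hN δ hδ hδN l s lt c hgrid hc hs hlt
end

section
/- Injectivity of the final-coordinate map: let δ > 0 with δ^{-1} ∈ ℕ, d ≥ 1, n ≥ 2, and let c > (n-1)(δ^{-d} - 1)·C(n-1, ⌈(n-1)/2⌉). For ordered sequences l = (l_1 < … < l_n) with l_j ∈ {0, δ, …, δ^{-d+1} - δ}, define s_j = ∑_k l_k - l_j and l̃_n(l) = l_n + c·s_n + ∑_{i=0}^{n-2} c^{i+2} ∑_{k=i}^{n-2} C(k,i)·s_{k-i+1}. Then the map l ↦ l̃_n(l) is injective: if l ≠ l' then l̃_n(l) ≠ l̃_n(l'). -/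
/-!
The difference of the two values is `ltilde` of `(l - l', s - s')`, a polynomial in `c` whose
coefficients lie on the grid `δℤ`. Strict monotonicity on the grid confines each `l_j - l'_j` to
`[-(δ⁻¹ᵈ - n) δ, (δ⁻¹ᵈ - n) δ]`, and the lower bound on `c` then makes every coefficient at most
`(c - 1) δ` in absolute value, so reading the base-`c` digits from the top shows that all
coefficients vanish. The coefficients of `c^(i+2)` form an upper triangular system in `s - s'`
with diagonal entries `C(n - 2, i) ≠ 0`, whence `s = s'`; and `l ↦ s` is injective because
`s = (𝟙𝟙ᵀ - I) l` and `n ≠ 1`.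
-/

open Finset

lemma eq_zero_of_mem_zmultiples_of_abs_lt {δ x : ℝ} (hx : x ∈ AddSubgroup.zmultiples δ)
    (hlt : |x| < δ) : x = 0 := by
  obtain ⟨z, rfl⟩ := AddSubgroup.mem_zmultiples_iff.mp hx
  have hδ : 0 < δ := (abs_nonneg _).trans_lt hlt
  rw [zsmul_eq_mul, abs_mul, abs_of_pos hδ, mul_lt_iff_lt_one_left hδ, ← Int.cast_abs,
    ← Int.cast_one, Int.cast_lt, Int.abs_lt_one_iff] at hlt
  simp [hlt]

lemma eq_zero_of_sum_mul_pow_eq_zero {δ c : ℝ} (hδ : 0 < δ) (a : ℕ → ℝ)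
    (hmem : ∀ p, a p ∈ AddSubgroup.zmultiples δ) (hbound : ∀ p, |a p| ≤ (c - 1) * δ) :
    ∀ t, ∑ p ∈ range t, a p * c ^ p = 0 → ∀ p < t, a p = 0 := by
  have hc : 0 ≤ c - 1 := nonneg_of_mul_nonneg_left ((abs_nonneg _).trans (hbound 0)) hδ
  intro t
  induction t with
  | zero => simp
  | succ t ih =>
    intro hsum
    rw [sum_range_succ, add_eq_zero_iff_eq_neg'] at hsum
    have hc0 : 0 ≤ c := by linarith
    have hct : 0 < c ^ t := pow_pos (by linarith) t
    -- `|a t| c^t ≤ (c - 1) δ (1 + c + ⋯ + c^(t-1)) = δ (c^t - 1)`, so `|a t| < δ`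
    have htop : a t = 0 := by
      refine eq_zero_of_mem_zmultiples_of_abs_lt (hmem t) ?_
      have hle : |a t| * c ^ t ≤ δ * (c ^ t - 1) := calc
        |a t| * c ^ t = |∑ p ∈ range t, a p * c ^ p| := by
          rw [← abs_of_pos hct, ← abs_mul, hsum, abs_neg]
        _ ≤ ∑ p ∈ range t, (c - 1) * δ * c ^ p := by
          refine (abs_sum_le_sum_abs _ _).trans (sum_le_sum fun p _ => ?_)
          rw [abs_mul, abs_of_nonneg (pow_nonneg hc0 p)]
          exact mul_le_mul_of_nonneg_right (hbound p) (pow_nonneg hc0 p)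
        _ = δ * (c ^ t - 1) := by rw [← mul_sum, ← geom_sum_mul]; ring
      nlinarith
    rw [htop, zero_mul, eq_comm, neg_eq_zero] at hsum
    intro p hp
    rcases Nat.lt_succ_iff_lt_or_eq.mp hp with hp | rfl
    · exact ih hsum p hp
    · exact htop

lemma eq_zero_of_sum_choose_mul_eq_zero {R : Type*} [CommRing R] [IsDomain R] [CharZero R]
    {M : ℕ} {y : ℕ → R} (h : ∀ i ≤ M, ∑ k ∈ Icc i M, (k.choose i : R) * y (k - i + 1) = 0) :
    ∀ j ∈ Icc 1 (M + 1), y j = 0 := by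
  intro j
  induction j using Nat.strong_induction_on with
  | _ j ih =>
    intro hj
    obtain ⟨hj1, hjM⟩ := mem_Icc.mp hj
    -- in the equation with `i = M + 1 - j`, every term but the last one (`k = M`) vanishes
    have hi := h (M + 1 - j) (by omega)
    rw [sum_eq_single_of_mem M (mem_Icc.mpr ⟨by omega, le_rfl⟩) fun k hk hkM => by
      have hk := mem_Icc.mp hk
      rw [ih _ (by omega) (mem_Icc.mpr ⟨by omega, by omega⟩), mul_zero],
      show M - (M + 1 - j) + 1 = j by omega] at hi
    exact (mul_eq_zero.mp hi).resolve_left (Nat.cast_ne_zero.mpr (Nat.choose_pos (by omega)).ne')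

lemma eq_zero_of_forall_sum_sub_eq_zero {ι K : Type*} [Field K] [CharZero K] {s : Finset ι}
    (hs : s.card ≠ 1) {x : ι → K} (h : ∀ j ∈ s, ∑ k ∈ s, x k - x j = 0) : ∀ j ∈ s, x j = 0 := by
  have hx : ∀ j ∈ s, x j = ∑ k ∈ s, x k := fun j hj => (sub_eq_zero.mp (h j hj)).symm
  have hsum : ((s.card : K) - 1) * ∑ k ∈ s, x k = 0 := by
    rw [sub_mul, one_mul, sub_eq_zero, ← nsmul_eq_mul, ← sum_const]
    exact (sum_congr rfl hx).symm
  have hcard : (s.card : K) - 1 ≠ 0 := sub_ne_zero.mpr (by exact_mod_cast hs)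
  intro j hj
  rw [hx j hj, (mul_eq_zero.mp hsum).resolve_left hcard]

lemma abs_sum_sub_le {ι : Type*} [DecidableEq ι] {s : Finset ι} {x : ι → ℝ} {w : ℝ}
    (hx : ∀ k ∈ s, |x k| ≤ w) {j : ι} (hj : j ∈ s) :
    |∑ k ∈ s, x k - x j| ≤ ((s.card : ℝ) - 1) * w := by
  rw [← sum_erase_eq_sub hj, ← Nat.cast_pred (card_pos.mpr ⟨j, hj⟩), ← card_erase_of_mem hj,
    ← nsmul_eq_mul]
  exact (abs_sum_le_sum_abs _ _).trans
    (sum_le_card_nsmul _ _ _ fun k hk => hx k (mem_of_mem_erase hk))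

lemma choose_le_choose_add_one_div_two (m r : ℕ) : m.choose r ≤ m.choose ((m + 1) / 2) := by
  rw [Nat.choose_symm_of_eq_add (by omega : m = (m + 1) / 2 + m / 2)]
  exact Nat.choose_le_middle r m

lemma add_le_of_lt_of_natCast_mul {δ : ℝ} (hδ : 0 < δ) {m m' : ℕ} (h : m * δ < m' * δ) :
    m * δ + δ ≤ m' * δ := by
  have hm : m + 1 ≤ m' := by exact_mod_cast lt_of_mul_lt_mul_right h hδ.le
  have : ((m : ℝ) + 1) * δ ≤ m' * δ := by gcongr; exact_mod_cast hm
  linarith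

lemma add_le_of_grid_of_lt {n : ℕ} {δ : ℝ} (hδ : 0 < δ) {l : ℕ → ℝ}
    (hgrid : ∀ j, 1 ≤ j → j ≤ n → ∃ m : ℕ, l j = m * δ)
    (hmono : ∀ j, 2 ≤ j → j ≤ n → l (j - 1) < l j) {i j : ℕ} (hi : 1 ≤ i) (hij : i ≤ j)
    (hj : j ≤ n) : l i + ((j : ℝ) - i) * δ ≤ l j := by
  induction j, hij using Nat.le_induction with
  | base => simp
  | succ j hij ih =>
    obtain ⟨m, hm⟩ := hgrid j (by omega) (by omega)
    obtain ⟨m', hm'⟩ := hgrid (j + 1) (by omega) hj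
    have hstep := hmono (j + 1) (by omega) hj
    rw [Nat.add_sub_cancel, hm, hm'] at hstep
    have := add_le_of_lt_of_natCast_mul hδ hstep
    rw [← hm, ← hm'] at this
    push_cast
    linarith [ih (by omega)]

lemma mem_Icc_of_grid {n E : ℕ} {δ : ℝ} (hδ : 0 < δ) {l : ℕ → ℝ}
    (hgrid : ∀ j, 1 ≤ j → j ≤ n → ∃ m : ℕ, m < E ∧ l j = m * δ)
    (hmono : ∀ j, 2 ≤ j → j ≤ n → l (j - 1) < l j) {j : ℕ} (hj : j ∈ Icc 1 n) :
    l j ∈ Set.Icc (((j : ℝ) - 1) * δ) (((E : ℝ) - 1 - (n - j)) * δ) := by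
  obtain ⟨hj1, hjn⟩ := mem_Icc.mp hj
  obtain ⟨m₁, -, hm₁⟩ := hgrid 1 le_rfl (hj1.trans hjn)
  obtain ⟨mₙ, hmₙE, hmₙ⟩ := hgrid n (hj1.trans hjn) le_rfl
  have hl₁ : 0 ≤ l 1 := hm₁ ▸ by positivity
  have hlₙ : l n ≤ ((E : ℝ) - 1) * δ := by
    rw [hmₙ]
    gcongr
    exact le_sub_iff_add_le.mpr (by exact_mod_cast hmₙE)
  have hgrid₀ : ∀ j, 1 ≤ j → j ≤ n → ∃ m : ℕ, l j = m * δ := fun j h₁ h₂ =>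
    (hgrid j h₁ h₂).imp fun _ => And.right
  have hlow := add_le_of_grid_of_lt hδ hgrid₀ hmono le_rfl hj1 hjn
  have hhigh := add_le_of_grid_of_lt hδ hgrid₀ hmono hj1 hjn le_rfl
  push_cast at hlow
  constructor <;> nlinarith

lemma sub_mem_zmultiples_of_grid {n : ℕ} {δ : ℝ} {l l' : ℕ → ℝ}
    (hgrid : ∀ j, 1 ≤ j → j ≤ n → ∃ m : ℕ, l j = m * δ)
    (hgrid' : ∀ j, 1 ≤ j → j ≤ n → ∃ m : ℕ, l' j = m * δ) :
    ∀ j ∈ Icc 1 n, (l - l') j ∈ AddSubgroup.zmultiples δ := fun j hj => by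
  obtain ⟨m, hm⟩ := hgrid j (mem_Icc.mp hj).1 (mem_Icc.mp hj).2
  obtain ⟨m', hm'⟩ := hgrid' j (mem_Icc.mp hj).1 (mem_Icc.mp hj).2
  rw [Pi.sub_apply, hm, hm', ← nsmul_eq_mul, ← nsmul_eq_mul]
  exact sub_mem (nsmul_mem (AddSubgroup.mem_zmultiples δ) m)
    (nsmul_mem (AddSubgroup.mem_zmultiples δ) m')

lemma abs_sub_le_of_grid {n E : ℕ} {δ : ℝ} (hδ : 0 < δ) {l l' : ℕ → ℝ}
    (hgrid : ∀ j, 1 ≤ j → j ≤ n → ∃ m : ℕ, m < E ∧ l j = m * δ)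
    (hgrid' : ∀ j, 1 ≤ j → j ≤ n → ∃ m : ℕ, m < E ∧ l' j = m * δ)
    (hmono : ∀ j, 2 ≤ j → j ≤ n → l (j - 1) < l j)
    (hmono' : ∀ j, 2 ≤ j → j ≤ n → l' (j - 1) < l' j) :
    ∀ j ∈ Icc 1 n, |(l - l') j| ≤ ((E : ℝ) - n) * δ := fun j hj => by
  obtain ⟨h₁, h₂⟩ := mem_Icc_of_grid hδ hgrid hmono hj
  obtain ⟨h₁', h₂'⟩ := mem_Icc_of_grid hδ hgrid' hmono' hj
  rw [Pi.sub_apply, abs_sub_le_iff]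
  constructor <;> linarith

def ltilde (n : ℕ) (c : ℝ) (l s : ℕ → ℝ) : ℝ :=
  l n + c * s n + ∑ i ∈ range (n - 1), c ^ (i + 2) *
    ∑ k ∈ Icc i (n - 2), (k.choose i : ℝ) * s (k - i + 1)

def ltildeCoeff (n : ℕ) (l s : ℕ → ℝ) : ℕ → ℝ
  | 0 => l n
  | 1 => s n
  | i + 2 => ∑ k ∈ Icc i (n - 2), (k.choose i : ℝ) * s (k - i + 1)

lemma ltilde_sub (n : ℕ) (c : ℝ) (l s l' s' : ℕ → ℝ) :
    ltilde n c l s - ltilde n c l' s' = ltilde n c (l - l') (s - s') := by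
  simp only [ltilde, Pi.sub_apply, mul_sub, sum_sub_distrib]
  ring

lemma ltilde_eq_sum_ltildeCoeff_mul_pow {n : ℕ} (hn : 1 ≤ n) (c : ℝ) (l s : ℕ → ℝ) :
    ltilde n c l s = ∑ p ∈ range (n + 1), ltildeCoeff n l s p * c ^ p := by
  obtain ⟨m, rfl⟩ := Nat.exists_eq_add_of_le' hn
  rw [sum_range_succ', sum_range_succ']
  simp only [ltilde, ltildeCoeff, Nat.add_sub_cancel, mul_comm (c ^ _), pow_zero]
  ring

lemma ltildeCoeff_mem {n : ℕ} (hn : 1 ≤ n) {l s : ℕ → ℝ} {G : AddSubgroup ℝ} (hl : l n ∈ G)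
    (hs : ∀ j ∈ Icc 1 n, s j ∈ G) (p : ℕ) : ltildeCoeff n l s p ∈ G := by
  match p with
  | 0 => exact hl
  | 1 => exact hs n (mem_Icc.mpr ⟨hn, le_rfl⟩)
  | i + 2 =>
    refine G.sum_mem fun k hk => ?_
    rw [← nsmul_eq_mul]
    have hk := mem_Icc.mp hk
    exact G.nsmul_mem (hs _ (mem_Icc.mpr ⟨by omega, by omega⟩)) _

lemma abs_ltildeCoeff_le {n : ℕ} (hn : 2 ≤ n) {l s : ℕ → ℝ} {b : ℝ} (hl : |l n| ≤ b)
    (hs : ∀ j ∈ Icc 1 n, |s j| ≤ b) (p : ℕ) :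
    |ltildeCoeff n l s p| ≤ (n - 1).choose ((n - 1 + 1) / 2) * b := by
  have hb : 0 ≤ b := (abs_nonneg _).trans hl
  have hC : (1 : ℝ) ≤ (n - 1).choose ((n - 1 + 1) / 2) := by
    exact_mod_cast Nat.choose_pos (by omega)
  match p with
  | 0 => exact hl.trans (le_mul_of_one_le_left hb hC)
  | 1 => exact (hs n (mem_Icc.mpr ⟨by omega, le_rfl⟩)).trans (le_mul_of_one_le_left hb hC)
  | i + 2 =>
    calc |ltildeCoeff n l s (i + 2)|
        ≤ ∑ k ∈ Icc i (n - 2), (k.choose i : ℝ) * b := by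
          refine (abs_sum_le_sum_abs _ _).trans (sum_le_sum fun k hk => ?_)
          rw [abs_mul, Nat.abs_cast]
          gcongr
          have hk := mem_Icc.mp hk
          exact hs _ (mem_Icc.mpr ⟨by omega, by omega⟩)
      _ = ((n - 1).choose (i + 1) : ℝ) * b := by
          rw [← sum_mul, ← Nat.cast_sum, Nat.sum_Icc_choose, show n - 2 + 1 = n - 1 by omega]
      _ ≤ _ := by gcongr; exact choose_le_choose_add_one_div_two _ _

lemma eq_zero_of_ltilde_eq_zero {n : ℕ} (hn : 2 ≤ n) {c δ b : ℝ} (hδ : 0 < δ) {l s : ℕ → ℝ}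
    (hl : l n ∈ AddSubgroup.zmultiples δ) (hs : ∀ j ∈ Icc 1 n, s j ∈ AddSubgroup.zmultiples δ)
    (hlb : |l n| ≤ b) (hsb : ∀ j ∈ Icc 1 n, |s j| ≤ b)
    (hb : (n - 1).choose ((n - 1 + 1) / 2) * b ≤ (c - 1) * δ) (h : ltilde n c l s = 0) :
    ∀ j ∈ Icc 1 n, s j = 0 := by
  rw [ltilde_eq_sum_ltildeCoeff_mul_pow (by omega)] at h
  have hcoeff := eq_zero_of_sum_mul_pow_eq_zero hδ _ (ltildeCoeff_mem (by omega) hl hs)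
    (fun p => (abs_ltildeCoeff_le hn hlb hsb p).trans hb) _ h
  have hlow := eq_zero_of_sum_choose_mul_eq_zero (M := n - 2) fun i hi =>
    hcoeff (i + 2) (by omega)
  intro j hj
  rcases (mem_Icc.mp hj).2.eq_or_lt with rfl | hjn
  · exact hcoeff 1 (by omega)
  · exact hlow j (mem_Icc.mpr ⟨(mem_Icc.mp hj).1, by omega⟩)

lemma choose_mul_mul_le_sub_one_mul {n E : ℕ} (hn : 2 ≤ n) {c δ : ℝ} (hδ : 0 < δ)
    (hc : c > ((n : ℝ) - 1) * ((E : ℝ) - 1) * (n - 1).choose ((n - 1 + 1) / 2)) :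
    (n - 1).choose ((n - 1 + 1) / 2) * (((n : ℝ) - 1) * (((E : ℝ) - n) * δ)) ≤ (c - 1) * δ := by
  have hn1 : (1 : ℝ) ≤ n - 1 := le_sub_iff_add_le.mpr (by exact_mod_cast hn)
  have hC : (1 : ℝ) ≤ (n - 1).choose ((n - 1 + 1) / 2) := by
    exact_mod_cast Nat.choose_pos (by omega)
  have hsq : 1 ≤ ((n : ℝ) - 1) ^ 2 * (n - 1).choose ((n - 1 + 1) / 2) :=
    one_le_mul_of_one_le_of_one_le (one_le_pow₀ hn1) hC
  rw [← mul_assoc, ← mul_assoc]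
  gcongr
  linarith

theorem ltilde_n_injective_general (n d N : ℕ) (hn : 2 ≤ n)
    (δ : ℝ) (hδ : δ > 0) (hδN : (N : ℝ) = δ⁻¹)
    (c : ℝ)
    (hc : c > ((n : ℝ) - 1) * ((δ⁻¹) ^ d - 1) * Nat.choose (n - 1) ((n - 1 + 1) / 2))
    (l l' s s' : ℕ → ℝ)
    (hgrid : ∀ j, 1 ≤ j → j ≤ n → ∃ m : ℕ, m < N ^ d ∧ l j = (m : ℝ) * δ)
    (hgrid' : ∀ j, 1 ≤ j → j ≤ n → ∃ m : ℕ, m < N ^ d ∧ l' j = (m : ℝ) * δ)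
    (hmono : ∀ j, 2 ≤ j → j ≤ n → l (j - 1) < l j)
    (hmono' : ∀ j, 2 ≤ j → j ≤ n → l' (j - 1) < l' j)
    (hs : ∀ j, s j = (∑ k ∈ Finset.Icc 1 n, l k) - l j)
    (hs' : ∀ j, s' j = (∑ k ∈ Finset.Icc 1 n, l' k) - l' j)
    (hne : ∃ j, 1 ≤ j ∧ j ≤ n ∧ l j ≠ l' j) :
    l n + c * s n + (∑ i ∈ Finset.range (n - 1), c ^ (i + 2) *
        ∑ k ∈ Finset.Icc i (n - 2), (Nat.choose k i : ℝ) * s (k - i + 1)) ≠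
    l' n + c * s' n + (∑ i ∈ Finset.range (n - 1), c ^ (i + 2) *
        ∑ k ∈ Finset.Icc i (n - 2), (Nat.choose k i : ℝ) * s' (k - i + 1)) := by
  intro heq
  have hΔs : ∀ j, (s - s') j = ∑ k ∈ Icc 1 n, (l - l') k - (l - l') j := fun j => by
    simp only [Pi.sub_apply, hs, hs', sum_sub_distrib]
    ring
  have hmem := sub_mem_zmultiples_of_grid (fun j h₁ h₂ => (hgrid j h₁ h₂).imp fun _ => And.right)
    (fun j h₁ h₂ => (hgrid' j h₁ h₂).imp fun _ => And.right)
  have habs := abs_sub_le_of_grid hδ hgrid hgrid' hmono hmono'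
  have hn_mem : n ∈ Icc 1 n := mem_Icc.mpr ⟨by omega, le_rfl⟩
  have hn1 : (1 : ℝ) ≤ n - 1 := le_sub_iff_add_le.mpr (by exact_mod_cast hn)
  rw [← hδN, ← Nat.cast_pow] at hc
  have hΔs_zero : ∀ j ∈ Icc 1 n, (s - s') j = 0 :=
    eq_zero_of_ltilde_eq_zero hn hδ (hmem n hn_mem)
      (fun j hj => hΔs j ▸ sub_mem (sum_mem hmem) (hmem j hj))
      ((habs n hn_mem).trans (le_mul_of_one_le_left ((abs_nonneg _).trans (habs n hn_mem)) hn1))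
      (fun j hj => by simpa [hΔs] using abs_sum_sub_le habs hj)
      (choose_mul_mul_le_sub_one_mul hn hδ hc)
      (by rw [← ltilde_sub, sub_eq_zero]; exact heq)
  obtain ⟨j, hj1, hjn, hj⟩ := hne
  exact hj (sub_eq_zero.mp (eq_zero_of_forall_sum_sub_eq_zero (by simp; omega)
    (fun k hk => hΔs k ▸ hΔs_zero k hk) j (mem_Icc.mpr ⟨hj1, hjn⟩)))

/-- Injectivity of the final-coordinate map l ↦ l̃_n. -/
theorem ltilde_n_injective (n d N : ℕ) (hn : 2 ≤ n) (hd : 1 ≤ d) (hN : 1 ≤ N)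
    (δ : ℝ) (hδ : δ > 0) (hδN : (N : ℝ) = δ⁻¹)
    (c : ℝ)
    (hc : c > ((n : ℝ) - 1) * ((δ⁻¹) ^ d - 1) * Nat.choose (n - 1) ((n - 1 + 1) / 2))
    (l l' s s' : ℕ → ℝ)
    (hgrid : ∀ j, 1 ≤ j → j ≤ n → ∃ m : ℕ, m < N ^ d ∧ l j = (m : ℝ) * δ)
    (hgrid' : ∀ j, 1 ≤ j → j ≤ n → ∃ m : ℕ, m < N ^ d ∧ l' j = (m : ℝ) * δ)
    (hmono : ∀ j, 2 ≤ j → j ≤ n → l (j - 1) < l j)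
    (hmono' : ∀ j, 2 ≤ j → j ≤ n → l' (j - 1) < l' j)
    (hs : ∀ j, s j = (∑ k ∈ Finset.Icc 1 n, l k) - l j)
    (hs' : ∀ j, s' j = (∑ k ∈ Finset.Icc 1 n, l' k) - l' j)
    (hne : ∃ j, 1 ≤ j ∧ j ≤ n ∧ l j ≠ l' j) :
    l n + c * s n + (∑ i ∈ Finset.range (n - 1), c ^ (i + 2) *
        ∑ k ∈ Finset.Icc i (n - 2), (Nat.choose k i : ℝ) * s (k - i + 1)) ≠
    l' n + c * s' n + (∑ i ∈ Finset.range (n - 1), c ^ (i + 2) *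
        ∑ k ∈ Finset.Icc i (n - 2), (Nat.choose k i : ℝ) * s' (k - i + 1)) :=
  ltilde_n_injective_general n d N hn δ hδ hδN c hc l l' s s' hgrid hgrid' hmono hmono' hs hs' hne
end

section
/- Contextual mapping theorem: with δ, d, n, c as above (c > (n-1)(δ^{-d}-1)·C(n-1, ⌈(n-1)/2⌉), n ≥ 4), define for each ordered input l the values l̃_j as in the selective-shift recursion and the final output q_j(l) = l̃_j + c^{n+1}·l̃_n. Then q is a contextual mapping: (i) for fixed l, all components q_1(l), …, q_n(l) are pairwise distinct; (ii) for distinct inputs l ≠ l', q_i(l) ≠ q_j(l') for all i, j. -/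
/-!
The map `(l, s) ↦ selectiveShift c l s` (the paper's `l̃`) is linear and, for `c ≥ 0`, monotone.
Since `s j - s (j + 1) = l (j + 1) - l j` and `s j ≥ l (j + 1)`, the increment
`l̃ (j + 1) - l̃ j` is at least `(c ^ 2 - c + 1) (l (j + 1) - l j) > 0`; this is (i).

For (ii), all values `l̃ i`, `l̃' j` lie in `[0, c ^ (n + 1) δ)`, using
`(1 + c) ^ (n - 1) ≤ e · c ^ (n - 1)` for `n - 1 ≤ c`. On the other hand
`δ⁻¹ (l̃ n - l̃' n) = ∑ e_r c ^ r` with integer digits `e_r` obtained from the grid differences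
through binomial coefficients of `n - 1`. The bound on `c` gives `|e_r| ≤ c - 1`, so the sum has
absolute value at least `1` unless all digits vanish, and the digits determine the grid
differences by a triangular system. Hence the term `c ^ (n + 1) l̃ n` of `q` cannot be
compensated.
-/

open Finset

section complementSum

variable {ι α : Type*} [AddCommGroup α] {S : Finset ι} {t : ι} {f : ι → α}

lemma le_sum_sub_of_ne [PartialOrder α] [IsOrderedAddMonoid α] (hf : ∀ i ∈ S, 0 ≤ f i)
    (ht : t ∈ S) {k : ι} (hk : k ∈ S) (hkt : k ≠ t) : f k ≤ ∑ i ∈ S, f i - f t := by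
  classical
  rw [← sum_erase_eq_sub ht]
  exact single_le_sum (fun i hi ↦ hf i (mem_of_mem_erase hi)) (mem_erase.2 ⟨hkt, hk⟩)

lemma sum_sub_nonneg [PartialOrder α] [IsOrderedAddMonoid α] (hf : ∀ i ∈ S, 0 ≤ f i)
    (ht : t ∈ S) : 0 ≤ ∑ i ∈ S, f i - f t := by
  classical
  rw [← sum_erase_eq_sub ht]
  exact sum_nonneg fun i hi ↦ hf i (mem_of_mem_erase hi)

lemma abs_sum_sub_le_s16 [LinearOrder α] [IsOrderedAddMonoid α] {W : α} (hf : ∀ i ∈ S, |f i| ≤ W)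
    (ht : t ∈ S) : |∑ i ∈ S, f i - f t| ≤ (#S - 1) • W := by
  classical
  rw [← sum_erase_eq_sub ht, ← card_erase_of_mem ht]
  exact (abs_sum_le_sum_abs _ _).trans
    (sum_le_card_nsmul _ _ _ fun i hi ↦ hf i (mem_of_mem_erase hi))

end complementSum

def selectiveShift (c : ℝ) (l s : ℕ → ℝ) (j : ℕ) : ℝ :=
  l j + c * s j + ∑ i ∈ range (j - 1), c ^ (i + 2) *
    ∑ k ∈ Icc i (j - 2), (k.choose i : ℝ) * s (k - i + 1)

section selectiveShift

variable {c δ : ℝ} {n j : ℕ} {l l' s s' : ℕ → ℝ}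

lemma selectiveShift_mono (hc : 0 ≤ c) (hj : 1 ≤ j) (hl : l j ≤ l' j)
    (hs : ∀ t ∈ Icc 1 j, s t ≤ s' t) :
    selectiveShift c l s j ≤ selectiveShift c l' s' j := by
  unfold selectiveShift
  gcongr with i hi k hk
  · exact hs j (by simp; omega)
  · simp only [mem_range, mem_Icc] at hi hk
    exact hs _ (by simp; omega)

lemma selectiveShift_nonneg (hc : 0 ≤ c) (hj : 1 ≤ j) (hl : 0 ≤ l j)
    (hs : ∀ t ∈ Icc 1 j, 0 ≤ s t) : 0 ≤ selectiveShift c l s j :=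
  le_of_eq_of_le (by simp [selectiveShift]) (selectiveShift_mono (l := 0) (s := 0) hc hj hl hs)

lemma selectiveShift_const (hj : 1 ≤ j) (B : ℝ) :
    selectiveShift c (fun _ ↦ B) (fun _ ↦ B) j = B * (1 + c * (1 + c) ^ (j - 1)) := by
  have hockey : ∀ i ∈ range (j - 1), c ^ (i + 2) * ∑ k ∈ Icc i (j - 2), (k.choose i : ℝ) * B
      = B * (c * ((j - 1).choose (i + 1) * c ^ (i + 1))) := by
    intro i hi
    rw [mem_range] at hi
    rw [← sum_mul, ← Nat.cast_sum, Nat.sum_Icc_choose, show j - 2 + 1 = j - 1 by omega]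
    ring
  have binom : (1 + c) ^ (j - 1) =
      1 + ∑ i ∈ range (j - 1), ((j - 1).choose (i + 1) * c ^ (i + 1) : ℝ) := by
    rw [add_comm, add_pow, sum_range_succ']
    simp only [one_pow, mul_one, pow_zero, Nat.choose_zero_right, Nat.cast_one]
    simp only [mul_comm, add_comm]
  rw [selectiveShift, sum_congr rfl hockey, ← mul_sum, ← mul_sum, binom]
  ring

lemma selectiveShift_sub_selectiveShift {a b : ℕ → ℝ} (hj : 1 ≤ j) (hl : l j - l' j = δ * a j)
    (hs : ∀ t ∈ Icc 1 j, s t - s' t = δ * b t) :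
    selectiveShift c l s j - selectiveShift c l' s' j = δ * selectiveShift c a b j := by
  have hs' : ∀ t ∈ Icc 1 j, s t = s' t + δ * b t := fun t ht ↦ sub_eq_iff_eq_add'.1 (hs t ht)
  have inner : ∀ i ∈ range (j - 1), ∑ k ∈ Icc i (j - 2), (k.choose i : ℝ) * s (k - i + 1) =
      ∑ k ∈ Icc i (j - 2), (k.choose i : ℝ) * s' (k - i + 1) +
        δ * ∑ k ∈ Icc i (j - 2), (k.choose i : ℝ) * b (k - i + 1) := by
    intro i hi
    rw [mul_sum, ← sum_add_distrib]
    refine sum_congr rfl fun k hk ↦ ?_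
    simp only [mem_range, mem_Icc] at hi hk
    rw [hs' _ (by simp; omega)]
    ring
  have outer : ∑ i ∈ range (j - 1), c ^ (i + 2) *
        ∑ k ∈ Icc i (j - 2), (k.choose i : ℝ) * s (k - i + 1) =
      ∑ i ∈ range (j - 1), c ^ (i + 2) * ∑ k ∈ Icc i (j - 2), (k.choose i : ℝ) * s' (k - i + 1) +
        δ * ∑ i ∈ range (j - 1), c ^ (i + 2) *
          ∑ k ∈ Icc i (j - 2), (k.choose i : ℝ) * b (k - i + 1) := by
    rw [mul_sum, ← sum_add_distrib]
    exact sum_congr rfl fun i hi ↦ by rw [inner i hi]; ring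
  rw [selectiveShift, selectiveShift, selectiveShift, outer, sub_eq_iff_eq_add'.1 hl,
    hs' j (by simp; omega)]
  ring

lemma selectiveShift_succ_sub (hj : 1 ≤ j) :
    selectiveShift c l s (j + 1) - selectiveShift c l s j = l (j + 1) - l j +
      c * (s (j + 1) - s j) + ∑ i ∈ range j, c ^ (i + 2) * ((j - 1).choose i * s (j - i)) := by
  obtain ⟨J, rfl⟩ : ∃ J, j = J + 1 := ⟨j - 1, by omega⟩
  have top : ∀ i ∈ range J, ∑ k ∈ Icc i J, (k.choose i : ℝ) * s (k - i + 1) =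
      ∑ k ∈ Icc i (J - 1), (k.choose i : ℝ) * s (k - i + 1) + J.choose i * s (J + 1 - i) := by
    intro i hi
    rw [mem_range] at hi
    obtain ⟨J', rfl⟩ : ∃ J', J = J' + 1 := ⟨J - 1, by omega⟩
    rw [sum_Icc_succ_top (by omega), show J' + 1 - i + 1 = J' + 1 + 1 - i by omega]
    rfl
  have outer : ∑ i ∈ range J, c ^ (i + 2) * ∑ k ∈ Icc i J, (k.choose i : ℝ) * s (k - i + 1) =
      ∑ i ∈ range J, c ^ (i + 2) * ∑ k ∈ Icc i (J - 1), (k.choose i : ℝ) * s (k - i + 1) +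
        ∑ i ∈ range J, c ^ (i + 2) * (J.choose i * s (J + 1 - i)) := by
    rw [← sum_add_distrib]
    exact sum_congr rfl fun i hi ↦ by rw [top i hi]; ring
  simp only [selectiveShift, Nat.add_sub_cancel, show J + 1 + 1 - 2 = J by omega,
    show J + 1 - 2 = J - 1 by omega, sum_range_succ _ J, outer, Icc_self, sum_singleton,
    Nat.choose_self, Nat.sub_self, add_tsub_cancel_left]
  ring

lemma selectiveShift_lt_succ (hc : 0 ≤ c) (hj : 1 ≤ j) (hl0 : 0 ≤ l j) (hl : l j < l (j + 1))
    (hs0 : ∀ t ∈ Icc 1 j, 0 ≤ s t) (hls : l (j + 1) ≤ s j)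
    (hss : s (j + 1) - s j = l j - l (j + 1)) :
    selectiveShift c l s j < selectiveShift c l s (j + 1) := by
  have first_term : c ^ 2 * s j ≤
      ∑ i ∈ range j, c ^ (i + 2) * ((j - 1).choose i * s (j - i)) := by
    refine le_of_eq_of_le (by simp) (single_le_sum (f := fun i ↦ c ^ (i + 2) *
      ((j - 1).choose i * s (j - i))) (fun i hi ↦ ?_) (mem_range.2 hj))
    rw [mem_range] at hi
    have := hs0 (j - i) (by simp; omega)
    positivity
  have hpos : 0 < (c ^ 2 - c + 1) * (l (j + 1) - l j) :=
    mul_pos (by nlinarith [sq_nonneg (c - 1)]) (sub_pos.2 hl)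
  have := mul_le_mul_of_nonneg_left hls (sq_nonneg c)
  have := mul_nonneg (sq_nonneg c) hl0
  rw [← sub_pos, selectiveShift_succ_sub hj, hss]
  nlinarith

lemma selectiveShift_le {B : ℝ} (hc : 0 ≤ c) (hn : 2 ≤ n) (hl : ∀ k ∈ Icc 1 n, 0 ≤ l k ∧ l k ≤ B)
    (hs : ∀ t, s t = ∑ k ∈ Icc 1 n, l k - l t) (hj : j ∈ Icc 1 n) :
    selectiveShift c l s j ≤ (n - 1) * B * (1 + c * (1 + c) ^ (n - 1)) := by
  have hj' := mem_Icc.1 hj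
  have hB : 0 ≤ B := (hl j hj).1.trans (hl j hj).2
  have hsB : ∀ t ∈ Icc 1 n, s t ≤ (n - 1) * B := fun t ht ↦ by
    have := abs_sum_sub_le_s16 (fun k hk ↦ abs_le.2 ⟨by linarith [hl k hk], (hl k hk).2⟩) ht
    rw [Nat.card_Icc, nsmul_eq_mul, Nat.cast_sub (by omega)] at this
    rw [hs]
    exact (le_abs_self _).trans (by simpa using this)
  have hn1 : (1 : ℝ) ≤ n - 1 := by
    rw [le_sub_iff_add_le]
    exact_mod_cast hn
  calc selectiveShift c l s j
      ≤ selectiveShift c (fun _ ↦ (n - 1) * B) (fun _ ↦ (n - 1) * B) j :=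
        selectiveShift_mono hc hj'.1 ((hl j hj).2.trans (le_mul_of_one_le_left hB hn1))
          fun t ht ↦ hsB t (by simp at ht ⊢; omega)
    _ = (n - 1) * B * (1 + c * (1 + c) ^ (j - 1)) := selectiveShift_const hj'.1 _
    _ ≤ (n - 1) * B * (1 + c * (1 + c) ^ (n - 1)) := by
        gcongr
        · linarith
        · omega

end selectiveShift

lemma strictMonoOn_Icc_of_pred_lt {α : Type*} [Preorder α] {f : ℕ → α} {n : ℕ}
    (h : ∀ j, 2 ≤ j → j ≤ n → f (j - 1) < f j) : StrictMonoOn f (Set.Icc 1 n) :=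
  strictMonoOn_of_lt_add_one Set.ordConnected_Icc fun a _ ha ha' ↦ by
    simpa using h (a + 1) (by simp at ha; omega) ha'.2

lemma selectiveShift_strictMonoOn {c : ℝ} {n : ℕ} {l s : ℕ → ℝ} (hc : 0 ≤ c)
    (hl0 : ∀ k ∈ Icc 1 n, 0 ≤ l k) (hl : StrictMonoOn l (Set.Icc 1 n))
    (hs : ∀ t, s t = ∑ k ∈ Icc 1 n, l k - l t) :
    StrictMonoOn (selectiveShift c l s) (Set.Icc 1 n) := by
  refine strictMonoOn_of_lt_add_one Set.ordConnected_Icc fun j _ hj hj' ↦ ?_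
  simp only [Set.mem_Icc] at hj hj'
  refine selectiveShift_lt_succ hc hj.1 (hl0 j (by simp; omega))
    (hl ⟨hj.1, hj.2⟩ ⟨by omega, hj'.2⟩ (by omega)) (fun t ht ↦ ?_) ?_ (by rw [hs, hs]; ring)
  · rw [hs]
    simp only [mem_Icc] at ht
    exact sum_sub_nonneg hl0 (by simp; omega)
  · rw [hs]
    exact le_sum_sub_of_ne hl0 (by simp; omega) (by simp; omega) (by omega)

lemma one_add_pow_le_exp_one_mul_pow {c : ℝ} {m : ℕ} (hc : 0 < c) (hm : (m : ℝ) ≤ c) :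
    (1 + c) ^ m ≤ Real.exp 1 * c ^ m := by
  have hexp : (1 + c⁻¹) ^ m ≤ Real.exp 1 :=
    calc (1 + c⁻¹) ^ m
        ≤ Real.exp c⁻¹ ^ m := by
          gcongr
          linarith [Real.add_one_le_exp c⁻¹]
      _ = Real.exp (m * c⁻¹) := (Real.exp_nat_mul _ _).symm
      _ ≤ Real.exp 1 := Real.exp_le_exp.2 (by rwa [← div_eq_mul_inv, div_le_one hc])
  calc (1 + c) ^ m = (1 + c⁻¹) ^ m * c ^ m := by
        rw [← mul_pow, add_mul, inv_mul_cancel₀ hc.ne', one_mul, add_comm]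
    _ ≤ Real.exp 1 * c ^ m := by gcongr

lemma mul_one_add_mul_one_add_pow_lt {K c : ℝ} {m : ℕ} (hKc : 3 * K ≤ c)
    (hm : (m : ℝ) ≤ c) (hc : 4 ≤ c) : K * (1 + c * (1 + c) ^ m) < c ^ (m + 2) := by
  have hc0 : 0 < c := by linarith
  have hcm : c ≤ c ^ (m + 1) := le_self_pow₀ (by linarith) (by omega)
  have hX : 1 + c * (1 + c) ^ m < 3 * c ^ (m + 1) :=
    calc 1 + c * (1 + c) ^ m
        ≤ 1 + c * (Real.exp 1 * c ^ m) := by gcongr; exact one_add_pow_le_exp_one_mul_pow hc0 hm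
      _ = 1 + Real.exp 1 * c ^ (m + 1) := by ring
      _ < 3 * c ^ (m + 1) := by nlinarith [Real.exp_one_lt_d9]
  calc K * (1 + c * (1 + c) ^ m)
      ≤ c / 3 * (1 + c * (1 + c) ^ m) := by gcongr; linarith
    _ < c / 3 * (3 * c ^ (m + 1)) := by gcongr
    _ = c ^ (m + 2) := by ring

lemma selectiveShift_mem_Ico {c δ P : ℝ} {n j : ℕ} {l s : ℕ → ℝ} (hn : 4 ≤ n) (hδ : 0 < δ)
    (hP : 1 ≤ P)
    (hc : ((n : ℝ) - 1) * P * (n - 1).choose ((n - 1) / 2) < c)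
    (hl : ∀ k ∈ Icc 1 n, 0 ≤ l k ∧ l k ≤ P * δ) (hs : ∀ t, s t = ∑ k ∈ Icc 1 n, l k - l t)
    (hj : j ∈ Icc 1 n) : selectiveShift c l s j ∈ Set.Ico 0 (c ^ (n + 1) * δ) := by
  have hn1 : (3 : ℝ) ≤ n - 1 := by
    rw [le_sub_iff_add_le]
    exact_mod_cast hn
  have hC : (n : ℝ) - 1 ≤ (n - 1).choose ((n - 1) / 2) := by
    have := Nat.choose_le_middle 1 (n - 1)
    rw [Nat.choose_one_right] at this
    rw [← Nat.cast_pred (by omega)]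
    exact_mod_cast this
  have hK : 3 ≤ ((n : ℝ) - 1) * P := by nlinarith
  have hKc : 3 * (((n : ℝ) - 1) * P) ≤ c := by nlinarith
  have hnc : ((n - 1 : ℕ) : ℝ) ≤ c := by rw [Nat.cast_pred (by omega)]; nlinarith
  have hj' := mem_Icc.1 hj
  refine ⟨selectiveShift_nonneg (by linarith) hj'.1 (hl j hj).1 fun t ht ↦ ?_, ?_⟩
  · rw [hs]
    exact sum_sub_nonneg (fun k hk ↦ (hl k hk).1) (by simp at ht ⊢; omega)
  calc selectiveShift c l s j
      ≤ (n - 1) * (P * δ) * (1 + c * (1 + c) ^ (n - 1)) :=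
        selectiveShift_le (by linarith) (by omega) hl hs hj
    _ = δ * ((n - 1) * P * (1 + c * (1 + c) ^ (n - 1))) := by ring
    _ < δ * c ^ (n - 1 + 2) :=
        mul_lt_mul_of_pos_left (mul_one_add_mul_one_add_pow_lt hKc hnc (by linarith)) hδ
    _ = c ^ (n + 1) * δ := by rw [show n - 1 + 2 = n + 1 by omega, mul_comm]

lemma abs_sum_mul_pow_le {c : ℝ} (hc : 0 ≤ c) {e : ℕ → ℝ} {m : ℕ}
    (he : ∀ r < m, |e r| ≤ c - 1) : |∑ r ∈ range m, e r * c ^ r| ≤ c ^ m - 1 := by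
  calc |∑ r ∈ range m, e r * c ^ r|
      ≤ ∑ r ∈ range m, (c - 1) * c ^ r := by
        refine (abs_sum_le_sum_abs _ _).trans (sum_le_sum fun r hr ↦ ?_)
        rw [abs_mul, abs_of_nonneg (pow_nonneg hc r)]
        exact mul_le_mul_of_nonneg_right (he r (mem_range.1 hr)) (pow_nonneg hc r)
    _ = c ^ m - 1 := by rw [← mul_sum, mul_comm, geom_sum_mul]

lemma one_le_abs_sum_intCast_mul_pow {c : ℝ} (hc : 0 ≤ c) {e : ℕ → ℤ} {m : ℕ}
    (he : ∀ r < m, |(e r : ℝ)| ≤ c - 1) (hne : ∃ r < m, e r ≠ 0) :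
    1 ≤ |∑ r ∈ range m, (e r : ℝ) * c ^ r| := by
  induction m with
  | zero => simp at hne
  | succ m ih =>
    rw [sum_range_succ]
    by_cases hm : e m = 0
    · obtain ⟨r, hr, her⟩ := hne
      have hrm : r < m := lt_of_le_of_ne (Nat.lt_succ_iff.1 hr) (by rintro rfl; exact her hm)
      simpa [hm] using ih (fun r hr ↦ he r (by omega)) ⟨r, hrm, her⟩
    · have lead : c ^ m ≤ |(e m : ℝ) * c ^ m| := by
        rw [abs_mul, abs_of_nonneg (pow_nonneg hc m)]
        exact le_mul_of_one_le_left (pow_nonneg hc m) (by exact_mod_cast Int.one_le_abs hm)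
      have tail := abs_sum_mul_pow_le hc fun r (hr : r < m) ↦ he r (by omega)
      have := abs_sub_abs_le_abs_add ((e m : ℝ) * c ^ m) (∑ r ∈ range m, (e r : ℝ) * c ^ r)
      rw [add_comm]
      linarith

def shiftDigit (a b : ℕ → ℤ) (n : ℕ) : ℕ → ℤ
  | 0 => a n
  | 1 => b n
  | i + 2 => ∑ k ∈ Icc i (n - 2), (k.choose i : ℤ) * b (k - i + 1)

section shiftDigit

variable {a b : ℕ → ℤ} {n : ℕ}

lemma selectiveShift_intCast_eq_sum_shiftDigit (c : ℝ) (hn : 1 ≤ n) :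
    selectiveShift c (fun k ↦ a k) (fun k ↦ b k) n =
      ∑ r ∈ range (n + 1), (shiftDigit a b n r : ℝ) * c ^ r := by
  obtain ⟨m, rfl⟩ : ∃ m, n = m + 1 := ⟨n - 1, by omega⟩
  rw [sum_range_succ', sum_range_succ']
  simp only [selectiveShift, shiftDigit, Nat.add_sub_cancel, Int.cast_sum, Int.cast_mul,
    Int.cast_natCast]
  simp only [mul_comm _ (c ^ _), zero_add, pow_zero, pow_one, mul_one]
  ring

lemma abs_shiftDigit_le {V : ℤ} (hn : 2 ≤ n) (ha : |a n| ≤ V) (hb : ∀ t ∈ Icc 1 n, |b t| ≤ V)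
    (r : ℕ) : |shiftDigit a b n r| ≤ (n - 1).choose ((n - 1) / 2) * V := by
  have hV : 0 ≤ V := (abs_nonneg _).trans ha
  have hmid : ∀ k, ((n - 1).choose k : ℤ) ≤ (n - 1).choose ((n - 1) / 2) :=
    fun k ↦ by exact_mod_cast Nat.choose_le_middle k (n - 1)
  have hone : (1 : ℤ) ≤ (n - 1).choose ((n - 1) / 2) := by
    exact_mod_cast Nat.choose_pos (Nat.div_le_self _ _)
  match r with
  | 0 => exact ha.trans (le_mul_of_one_le_left hV hone)
  | 1 => exact (hb n (by simp; omega)).trans (le_mul_of_one_le_left hV hone)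
  | i + 2 =>
    calc |shiftDigit a b n (i + 2)|
        ≤ ∑ k ∈ Icc i (n - 2), (k.choose i : ℤ) * V := by
          refine (abs_sum_le_sum_abs _ _).trans (sum_le_sum fun k hk ↦ ?_)
          simp only [mem_Icc] at hk
          rw [abs_mul, Nat.abs_cast]
          exact mul_le_mul_of_nonneg_left (hb _ (by simp; omega)) (Nat.cast_nonneg _)
      _ = (n - 1).choose (i + 1) * V := by
          rw [← sum_mul, ← Nat.cast_sum, Nat.sum_Icc_choose, show n - 2 + 1 = n - 1 by omega]
      _ ≤ (n - 1).choose ((n - 1) / 2) * V := mul_le_mul_of_nonneg_right (hmid _) hV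

lemma exists_shiftDigit_ne_zero (hn : 2 ≤ n)
    (hb : ∀ t ∈ Icc 1 n, b t = ∑ k ∈ Icc 1 n, a k - a t) (ha : ∃ k ∈ Icc 1 n, a k ≠ 0) :
    ∃ r < n + 1, shiftDigit a b n r ≠ 0 := by
  by_contra! h
  have han : a n = 0 := h 0 (by omega)
  have hsum : ∑ k ∈ Icc 1 n, a k = 0 := by
    have := hb n (by simp; omega)
    have := h 1 (by omega)
    simp only [shiftDigit] at this
    omega
  -- the digit of index `n + 1 - t` determines `b t` once `b 1, …, b (t - 1)` vanish
  have hbt : ∀ t, 1 ≤ t → t < n → b t = 0 := by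
    intro t
    induction t using Nat.strong_induction_on with
    | _ t ih =>
      intro ht1 htn
      have hdigit := h (n - 1 - t + 2) (by omega)
      rw [shiftDigit, sum_eq_single (n - 2)] at hdigit
      · rw [show n - 2 - (n - 1 - t) + 1 = t by omega] at hdigit
        exact (mul_eq_zero.1 hdigit).resolve_left
          (by exact_mod_cast (Nat.choose_pos (by omega)).ne')
      · intro k hk hkn
        simp only [mem_Icc] at hk
        rw [ih _ (by omega) (by omega) (by omega), mul_zero]
      · intro hn2
        exact absurd (mem_Icc.2 ⟨by omega, le_rfl⟩) hn2
  obtain ⟨k, hk, hak⟩ := ha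
  simp only [mem_Icc] at hk
  rcases hk.2.lt_or_eq with hkn | rfl
  · have := hb k (by simp; omega)
    rw [hbt k hk.1 hkn, hsum] at this
    omega
  · exact hak han

end shiftDigit

section injectivity

variable {c δ : ℝ} {n : ℕ} {l l' s s' : ℕ → ℝ}

lemma selectiveShift_sub_eq_mul_sum_shiftDigit {a : ℕ → ℤ} (hn : 1 ≤ n)
    (hla : ∀ k ∈ Icc 1 n, l k - l' k = δ * a k) (hs : ∀ t, s t = ∑ k ∈ Icc 1 n, l k - l t)
    (hs' : ∀ t, s' t = ∑ k ∈ Icc 1 n, l' k - l' t) :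
    selectiveShift c l s n - selectiveShift c l' s' n = δ * ∑ r ∈ range (n + 1),
      (shiftDigit a (fun t ↦ ∑ k ∈ Icc 1 n, a k - a t) n r : ℝ) * c ^ r := by
  rw [← selectiveShift_intCast_eq_sum_shiftDigit c hn]
  have hsum : ∑ k ∈ Icc 1 n, l k - ∑ k ∈ Icc 1 n, l' k = δ * ∑ k ∈ Icc 1 n, (a k : ℝ) := by
    rw [← sum_sub_distrib, mul_sum]
    exact sum_congr rfl hla
  refine selectiveShift_sub_selectiveShift hn (hla n (by simp; omega)) fun t ht ↦ ?_
  have := hla t (by simp at ht ⊢; omega)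
  rw [hs, hs']
  push_cast
  linarith

lemma le_abs_selectiveShift_sub {K : ℕ} {a : ℕ → ℤ} (hn : 2 ≤ n) (hδ : 0 ≤ δ)
    (hc : ((n : ℝ) - 1) * (K - 1) * (n - 1).choose ((n - 1) / 2) < c)
    (hla : ∀ k ∈ Icc 1 n, l k - l' k = δ * a k) (haK : ∀ k ∈ Icc 1 n, |a k| ≤ K - 2)
    (hs : ∀ t, s t = ∑ k ∈ Icc 1 n, l k - l t) (hs' : ∀ t, s' t = ∑ k ∈ Icc 1 n, l' k - l' t)
    (hne : ∃ k ∈ Icc 1 n, a k ≠ 0) :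
    δ ≤ |selectiveShift c l s n - selectiveShift c l' s' n| := by
  have hnn : n ∈ Icc 1 n := by simp; omega
  have hW : 0 ≤ (K : ℤ) - 2 := (abs_nonneg _).trans (haK n hnn)
  have hdigit := abs_shiftDigit_le (a := a) hn
    ((haK n hnn).trans (le_mul_of_one_le_left hW (by omega : (1 : ℤ) ≤ (n - 1 : ℕ))))
    (fun t ht ↦ by simpa using abs_sum_sub_le_s16 haK ht)
  have hK : (2 : ℝ) ≤ K := by exact_mod_cast (by omega : 2 ≤ K)
  have hCn : (1 : ℝ) ≤ (n - 1).choose ((n - 1) / 2) * (n - 1) := by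
    refine one_le_mul_of_one_le_of_one_le ?_ (le_sub_iff_add_le.2 (by exact_mod_cast hn))
    exact_mod_cast Nat.choose_pos (Nat.div_le_self _ _)
  have hc1 : 1 ≤ c := by nlinarith
  have hdigit' : ∀ r < n + 1,
      |(shiftDigit a (fun t ↦ ∑ k ∈ Icc 1 n, a k - a t) n r : ℝ)| ≤ c - 1 := fun r _ ↦ by
    have h := (Int.cast_le (R := ℝ)).2 (hdigit r)
    push_cast [Nat.cast_pred (by omega : 0 < n)] at h
    nlinarith
  rw [selectiveShift_sub_eq_mul_sum_shiftDigit (by omega) hla hs hs', abs_mul, abs_of_nonneg hδ]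
  exact le_mul_of_one_le_right hδ (one_le_abs_sum_intCast_mul_pow (by linarith) hdigit'
    (exists_shiftDigit_ne_zero hn (fun t _ ↦ rfl) hne))

end injectivity

lemma exists_strictMonoOn_of_grid {n K : ℕ} {δ : ℝ} {l : ℕ → ℝ} (hδ : 0 < δ)
    (hgrid : ∀ j, 1 ≤ j → j ≤ n → ∃ m : ℕ, m < K ∧ l j = m * δ)
    (hl : StrictMonoOn l (Set.Icc 1 n)) :
    ∃ M : ℕ → ℕ, StrictMonoOn M (Set.Icc 1 n) ∧ ∀ k ∈ Icc 1 n, M k < K ∧ l k = M k * δ := by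
  choose! M hMK hMl using hgrid
  refine ⟨M, fun i hi j hj hij ↦ ?_, fun k hk ↦ ?_⟩
  · have := hl hi hj hij
    rw [hMl i hi.1 hi.2, hMl j hj.1 hj.2] at this
    exact_mod_cast lt_of_mul_lt_mul_right this hδ.le
  · rw [mem_Icc] at hk
    exact ⟨hMK k hk.1 hk.2, hMl k hk.1 hk.2⟩

lemma nonneg_and_le_of_grid {n K : ℕ} {δ : ℝ} {l : ℕ → ℝ} {M : ℕ → ℕ} (hδ : 0 ≤ δ)
    (hMl : ∀ k ∈ Icc 1 n, M k < K ∧ l k = M k * δ) :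
    ∀ k ∈ Icc 1 n, 0 ≤ l k ∧ l k ≤ (K - 1) * δ := fun k hk ↦ by
  have := (hMl k hk).1
  rw [(hMl k hk).2]
  exact ⟨by positivity, by gcongr; exact le_sub_iff_add_le.2 (by exact_mod_cast this)⟩

lemma abs_sub_le_of_strictMonoOn {M M' : ℕ → ℕ} {n K : ℕ} (hn : 2 ≤ n)
    (hM : StrictMonoOn M (Set.Icc 1 n)) (hM' : StrictMonoOn M' (Set.Icc 1 n)) (hMK : M n < K)
    (hM'K : M' n < K) {k : ℕ} (hk : k ∈ Icc 1 n) : |(M k : ℤ) - M' k| ≤ K - 2 := by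
  simp only [mem_Icc] at hk
  have hn' : n ∈ Set.Icc 1 n := ⟨by omega, le_rfl⟩
  rw [abs_sub_le_iff]
  rcases hk.2.lt_or_eq with hkn | rfl
  · have := hM ⟨hk.1, hk.2⟩ hn' hkn
    have := hM' ⟨hk.1, hk.2⟩ hn' hkn
    omega
  · have := hM ⟨le_rfl, by omega⟩ hn' (by omega : 1 < k)
    have := hM' ⟨le_rfl, by omega⟩ hn' (by omega : 1 < k)
    omega

lemma le_abs_selectiveShift_sub_of_grid {c δ : ℝ} {n K : ℕ} {l l' s s' : ℕ → ℝ}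
    {M M' : ℕ → ℕ} (hn : 2 ≤ n) (hδ : 0 < δ)
    (hc : ((n : ℝ) - 1) * (K - 1) * (n - 1).choose ((n - 1) / 2) < c)
    (hM : StrictMonoOn M (Set.Icc 1 n)) (hM' : StrictMonoOn M' (Set.Icc 1 n))
    (hMl : ∀ k ∈ Icc 1 n, M k < K ∧ l k = M k * δ)
    (hM'l : ∀ k ∈ Icc 1 n, M' k < K ∧ l' k = M' k * δ)
    (hs : ∀ t, s t = ∑ k ∈ Icc 1 n, l k - l t) (hs' : ∀ t, s' t = ∑ k ∈ Icc 1 n, l' k - l' t)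
    (hne : ∃ k ∈ Icc 1 n, l k ≠ l' k) :
    δ ≤ |selectiveShift c l s n - selectiveShift c l' s' n| := by
  have hnn : n ∈ Icc 1 n := by simp; omega
  obtain ⟨k, hk, hlk⟩ := hne
  refine le_abs_selectiveShift_sub (a := fun k ↦ (M k : ℤ) - M' k) hn hδ.le hc (fun k hk ↦ ?_)
    (fun k ↦ abs_sub_le_of_strictMonoOn hn hM hM' (hMl n hnn).1 (hM'l n hnn).1) hs hs'
    ⟨k, hk, fun h ↦ hlk ?_⟩
  · rw [(hMl k hk).2, (hM'l k hk).2]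
    push_cast
    ring
  · rw [(hMl k hk).2, (hM'l k hk).2]
    congr 2
    omega

lemma add_mul_ne_add_mul {x y u v C δ : ℝ} (hC : 0 < C) (hx : x ∈ Set.Ico 0 (C * δ))
    (hy : y ∈ Set.Ico 0 (C * δ)) (huv : δ ≤ |u - v|) : x + C * u ≠ y + C * v := by
  intro h
  have hxy := abs_sub_lt_of_nonneg_of_lt hy.1 hy.2 hx.1 hx.2
  rw [show y - x = C * (u - v) by linarith, abs_mul, abs_of_pos hC] at hxy
  exact (mul_le_mul_of_nonneg_left huv hC.le).not_gt hxy

theorem contextual_mapping_general (n d N : ℕ) (hn : 4 ≤ n)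
    (δ : ℝ) (hδ : δ > 0) (hδN : (N : ℝ) = δ⁻¹)
    (c : ℝ)
    (hc : c > ((n : ℝ) - 1) * ((δ⁻¹) ^ d - 1) * Nat.choose (n - 1) ((n - 1 + 1) / 2))
    (l l' s s' lt lt' q q' : ℕ → ℝ)
    (hgrid : ∀ j, 1 ≤ j → j ≤ n → ∃ m : ℕ, m < N ^ d ∧ l j = (m : ℝ) * δ)
    (hgrid' : ∀ j, 1 ≤ j → j ≤ n → ∃ m : ℕ, m < N ^ d ∧ l' j = (m : ℝ) * δ)
    (hmono : ∀ j, 2 ≤ j → j ≤ n → l (j - 1) < l j)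
    (hmono' : ∀ j, 2 ≤ j → j ≤ n → l' (j - 1) < l' j)
    (hs : ∀ j, s j = (∑ k ∈ Finset.Icc 1 n, l k) - l j)
    (hs' : ∀ j, s' j = (∑ k ∈ Finset.Icc 1 n, l' k) - l' j)
    (hlt : ∀ j, lt j = l j + c * s j +
      ∑ i ∈ Finset.range (j - 1), c ^ (i + 2) *
        ∑ k ∈ Finset.Icc i (j - 2), (Nat.choose k i : ℝ) * s (k - i + 1))
    (hlt' : ∀ j, lt' j = l' j + c * s' j +
      ∑ i ∈ Finset.range (j - 1), c ^ (i + 2) *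
        ∑ k ∈ Finset.Icc i (j - 2), (Nat.choose k i : ℝ) * s' (k - i + 1))
    (hq : ∀ j, q j = lt j + c ^ (n + 1) * lt n)
    (hq' : ∀ j, q' j = lt' j + c ^ (n + 1) * lt' n) :
    (∀ i j, 1 ≤ i → i ≤ n → 1 ≤ j → j ≤ n → i ≠ j → q i ≠ q j) ∧
    ((∃ j, 1 ≤ j ∧ j ≤ n ∧ l j ≠ l' j) →
      ∀ i j, 1 ≤ i → i ≤ n → 1 ≤ j → j ≤ n → q i ≠ q' j) := by
  obtain rfl : lt = selectiveShift c l s := funext hlt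
  obtain rfl : lt' = selectiveShift c l' s' := funext hlt'
  have hl := strictMonoOn_Icc_of_pred_lt hmono
  obtain ⟨M, hM, hMl⟩ := exists_strictMonoOn_of_grid hδ hgrid hl
  obtain ⟨M', hM', hM'l⟩ :=
    exists_strictMonoOn_of_grid hδ hgrid' (strictMonoOn_Icc_of_pred_lt hmono')
  have hK : (2 : ℝ) ≤ (N ^ d : ℕ) := by
    have := hM (a := 1) (b := 2) ⟨le_rfl, by omega⟩ ⟨by omega, by omega⟩ one_lt_two
    exact_mod_cast (by have := (hMl 2 (by simp; omega)).1; omega : 2 ≤ N ^ d)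
  rw [← Nat.choose_symm (by omega), show n - 1 - (n - 1 + 1) / 2 = (n - 1) / 2 by omega,
    show (δ⁻¹) ^ d = (N ^ d : ℕ) by rw [Nat.cast_pow, hδN]] at hc
  have hc0 : 0 < c := lt_of_le_of_lt (mul_nonneg (mul_nonneg
    (sub_nonneg.2 (by exact_mod_cast (by omega : 1 ≤ n))) (by linarith)) (Nat.cast_nonneg _)) hc
  refine ⟨fun i j hi hi' hj hj' hij hqij ↦ hij ?_, fun hne i j hi hi' hj hj' ↦ ?_⟩
  · refine (selectiveShift_strictMonoOn hc0.le (fun k hk ↦ (nonneg_and_le_of_grid hδ.le hMl k hk).1)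
      hl hs).injOn ⟨hi, hi'⟩ ⟨hj, hj'⟩ ?_
    rw [hq, hq] at hqij
    linarith
  obtain ⟨k, hk, hk', hlk⟩ := hne
  rw [hq, hq']
  exact add_mul_ne_add_mul (pow_pos hc0 _)
    (selectiveShift_mem_Ico hn hδ (by linarith) hc (nonneg_and_le_of_grid hδ.le hMl) hs
      (by simp; omega))
    (selectiveShift_mem_Ico hn hδ (by linarith) hc (nonneg_and_le_of_grid hδ.le hM'l) hs'
      (by simp; omega))
    (le_abs_selectiveShift_sub_of_grid (by omega) hδ hc hM hM' hMl hM'l hs hs'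
      ⟨k, by simp; omega, hlk⟩)

/-- Contextual mapping theorem: q_j(l) = l̃_j + c^{n+1}·l̃_n is a contextual mapping. -/
theorem contextual_mapping (n d N : ℕ) (hn : 4 ≤ n) (hd : 1 ≤ d) (hN : 1 ≤ N)
    (δ : ℝ) (hδ : δ > 0) (hδN : (N : ℝ) = δ⁻¹)
    (c : ℝ)
    (hc : c > ((n : ℝ) - 1) * ((δ⁻¹) ^ d - 1) * Nat.choose (n - 1) ((n - 1 + 1) / 2))
    (l l' s s' lt lt' q q' : ℕ → ℝ)
    (hgrid : ∀ j, 1 ≤ j → j ≤ n → ∃ m : ℕ, m < N ^ d ∧ l j = (m : ℝ) * δ)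
    (hgrid' : ∀ j, 1 ≤ j → j ≤ n → ∃ m : ℕ, m < N ^ d ∧ l' j = (m : ℝ) * δ)
    (hmono : ∀ j, 2 ≤ j → j ≤ n → l (j - 1) < l j)
    (hmono' : ∀ j, 2 ≤ j → j ≤ n → l' (j - 1) < l' j)
    (hs : ∀ j, s j = (∑ k ∈ Finset.Icc 1 n, l k) - l j)
    (hs' : ∀ j, s' j = (∑ k ∈ Finset.Icc 1 n, l' k) - l' j)
    (hlt : ∀ j, lt j = l j + c * s j +
      ∑ i ∈ Finset.range (j - 1), c ^ (i + 2) *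
        ∑ k ∈ Finset.Icc i (j - 2), (Nat.choose k i : ℝ) * s (k - i + 1))
    (hlt' : ∀ j, lt' j = l' j + c * s' j +
      ∑ i ∈ Finset.range (j - 1), c ^ (i + 2) *
        ∑ k ∈ Finset.Icc i (j - 2), (Nat.choose k i : ℝ) * s' (k - i + 1))
    (hq : ∀ j, q j = lt j + c ^ (n + 1) * lt n)
    (hq' : ∀ j, q' j = lt' j + c ^ (n + 1) * lt' n) :
    (∀ i j, 1 ≤ i → i ≤ n → 1 ≤ j → j ≤ n → i ≠ j → q i ≠ q j) ∧
    ((∃ j, 1 ≤ j ∧ j ≤ n ∧ l j ≠ l' j) →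
      ∀ i j, 1 ≤ i → i ≤ n → 1 ≤ j → j ≤ n → q i ≠ q' j) :=
  contextual_mapping_general n d N hn δ hδ hδN c hc l l' s s' lt lt' q q' hgrid hgrid' hmono hmono'
    hs hs' hlt hlt' hq hq'
end
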